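/- Let d ≥ 2 and let 𝒞 : Matrix d d ℂ → Matrix d d ℂ be a linear map satisfying 𝒞(U* ρ Uᵀ) = U 𝒞(ρ) U† for every unitary U ∈ Matrix d d ℂ and every ρ ∈ Matrix d d ℂ (where U* is the entrywise complex conjugate and Uᵀ the transpose). Then there exist scalars γ, δ ∈ ℂ such that the Choi operator of 𝒞 equals C = γ P₊ + δ P₋, where P_± = (I ± E)/2 are the projectors onto the symmetric and antisymmetric subspaces of ℂ^d ⊗ ℂ^d; moreover, if 𝒞 is trace preserving then (d+1)γ + (d−1)δ = 2, and if 𝒞 is completely positive then γ, δ ≥ 0. -/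

import Mathlib

open ComplexOrder

noncomputable section

/-- Choi operator `∑ i j, F(E i j) ⊗ E i j` of a map between matrix algebras,
where `E i j` are the matrix units. -/
def choiFun {I O : Type} [Fintype I] [DecidableEq I]
    (F : Matrix I I ℂ → Matrix O O ℂ) : Matrix (O × I) (O × I) ℂ :=
  ∑ i : I, ∑ j : I,
    Matrix.kroneckerMap (· * ·) (F (Matrix.single i j 1)) (Matrix.single i j 1)

/-- The extension `F ⊗ id` of a map on matrices, acting on a composite system. -/
def tensorId {I O K : Type} (F : Matrix I I ℂ → Matrix O O ℂ)
    (M : Matrix (I × K) (I × K) ℂ) : Matrix (O × K) (O × K) ℂ :=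
  fun p q => F (fun i j => M (i, p.2) (j, q.2)) p.1 q.1

/-- Complete positivity of a linear map between matrix algebras: for every
`k ∈ ℕ`, `F ⊗ id_{Matrix (Fin k) (Fin k) ℂ}` preserves positive semidefiniteness. -/
def IsCPMap {I O : Type} [Fintype I] [Fintype O]
    (F : Matrix I I ℂ →ₗ[ℂ] Matrix O O ℂ) : Prop :=
  ∀ (k : ℕ) (M : Matrix (I × Fin k) (I × Fin k) ℂ),
    M.PosSemidef → (tensorId (⇑F) M).PosSemidef

/-- Quantum channel: completely positive and trace preserving. -/
def IsCPTPMap {I O : Type} [Fintype I] [Fintype O]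
    (F : Matrix I I ℂ →ₗ[ℂ] Matrix O O ℂ) : Prop :=
  IsCPMap F ∧ ∀ M : Matrix I I ℂ, (F M).trace = M.trace

/-- Partial trace over the first tensor factor. -/
def ptr1 {O I : Type} [Fintype O] (C : Matrix (O × I) (O × I) ℂ) : Matrix I I ℂ :=
  fun i j => ∑ p : O, C (p, i) (p, j)

/-- Partial trace over the second tensor factor. -/
def ptr2 {O I : Type} [Fintype I] (C : Matrix (O × I) (O × I) ℂ) : Matrix O O ℂ :=
  fun p q => ∑ j : I, C (p, j) (q, j)

/-- `dyadM K = |K⟩⟩⟨⟨K|`, the rank-one operator associated with the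
vectorization `|K⟩⟩ = ∑ i j, K i j |i⟩⊗|j⟩` of the matrix `K`. -/
def dyadM {m n : Type} (K : Matrix m n ℂ) : Matrix (m × n) (m × n) ℂ :=
  fun p q => K p.1 p.2 * star (K q.1 q.2)

/-- The swap (flip) operator `E` on `ℂ^d ⊗ ℂ^d`. -/
def swapOp (d : ℕ) : Matrix (Fin d × Fin d) (Fin d × Fin d) ℂ :=
  fun p q => if p.1 = q.2 ∧ p.2 = q.1 then 1 else 0

/-- The projector `P₊ = (I + E)/2` onto the symmetric subspace of `ℂ^d ⊗ ℂ^d`. -/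
def Pplus (d : ℕ) : Matrix (Fin d × Fin d) (Fin d × Fin d) ℂ :=
  ((1 : ℂ) / 2) • ((1 : Matrix (Fin d × Fin d) (Fin d × Fin d) ℂ) + swapOp d)

/-- The projector `P₋ = (I - E)/2` onto the antisymmetric subspace of `ℂ^d ⊗ ℂ^d`. -/
def Pminus (d : ℕ) : Matrix (Fin d × Fin d) (Fin d × Fin d) ℂ :=
  ((1 : ℂ) / 2) • ((1 : Matrix (Fin d × Fin d) (Fin d × Fin d) ℂ) - swapOp d)
/-!
Covariance says exactly that the Choi operator `C` commutes with `U ⊗ U` for every unitary `U`;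
we only use this entrywise, for three kinds of unitaries. Diagonal phases force
`C (p, k) (q, l) = 0` unless `{p, k} = {q, l}` as unordered pairs. Permutation matrices, acting
2-transitively, show that `α = C (a, b) (a, b)` and `β = C (a, b) (b, a)` do not depend on
`a ≠ b`. A real rotation in the `(a, b)`-plane yields `C (a, a) (a, a) = α + β`. Hence
`C = α • 1 + β • E = (α + β) • P₊ + (α - β) • P₋`. Trace preservation gives
`tr 𝒞(E_aa) = d α + β = 1`, and complete positivity makes `C` positive semidefinite, whose
quadratic form at `e_a ⊗ e_a` and at `e_a ⊗ e_b - e_b ⊗ e_a` is `α + β` and `2 (α - β)`.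
-/

open Matrix

lemma eq_of_forall_ite_I_eq {n : Type} [DecidableEq n] {k l : n}
    (h : ∀ a, (if k = a then Complex.I else 1) = if l = a then Complex.I else 1) : k = l :=
  (by simpa [Complex.ext_iff] using h k : l = k).symm

lemma sym2_eq_of_forall_ite_I_mul_eq {n : Type} [DecidableEq n] {p k q l : n}
    (h : ∀ a, (if p = a then Complex.I else 1) * (if k = a then Complex.I else 1) =
      (if q = a then Complex.I else 1) * (if l = a then Complex.I else 1)) :
    s(p, k) = s(q, l) := by
  have hp : p = q ∨ p = l := by
    by_contra! hpql
    have := h p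
    rw [if_pos rfl, if_neg hpql.1.symm, if_neg hpql.2.symm] at this
    split_ifs at this <;> norm_num [Complex.ext_iff] at this
  have hne : ∀ a, (if p = a then Complex.I else 1) ≠ 0 := fun a => by split_ifs <;> simp
  rcases hp with rfl | rfl
  · rw [eq_of_forall_ite_I_eq fun a => mul_left_cancel₀ (hne a) (h a)]
  · rw [Sym2.eq_swap, eq_of_forall_ite_I_eq fun a =>
      mul_left_cancel₀ (hne a) ((h a).trans (mul_comm _ _))]

section UnitaryGroup

variable {n : Type} [Fintype n] [DecidableEq n]

lemma diagonal_mem_unitaryGroup {t : n → ℂ} (ht : ∀ m, star (t m) * t m = 1) :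
    diagonal t ∈ unitaryGroup n ℂ := by
  rw [mem_unitaryGroup_iff, star_eq_conjTranspose, diagonal_conjTranspose, diagonal_mul_diagonal,
    ← diagonal_one]
  exact congrArg diagonal (funext fun m => (mul_comm _ _).trans (ht m))

lemma permMatrix_mem_unitaryGroup (σ : Equiv.Perm n) : σ.permMatrix ℂ ∈ unitaryGroup n ℂ := by
  rw [mem_unitaryGroup_iff, star_eq_conjTranspose, conjTranspose_permMatrix, ← permMatrix_mul,
    inv_mul_cancel, permMatrix_one]

def Matrix.planeRotation (a b : n) (c s : ℂ) : Matrix n n ℂ :=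
  1 + (c - 1) • (single a a 1 + single b b 1) + s • (single b a 1 - single a b 1)

lemma Matrix.planeRotation_mem_unitaryGroup {a b : n} (hab : a ≠ b) {c s : ℝ}
    (hcs : c ^ 2 + s ^ 2 = 1) : planeRotation a b (c : ℂ) s ∈ unitaryGroup n ℂ := by
  set P : Matrix n n ℂ := single a a 1 + single b b 1
  set J : Matrix n n ℂ := single b a 1 - single a b 1
  have hP : star P = P := by simp [P, star_eq_conjTranspose]
  have hJ : star J = -J := by simp [J, star_eq_conjTranspose]
  have hPP : P * P = P := by simp [P, add_mul, mul_add, hab, hab.symm]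
  have hPJ : P * J = J := by simp [P, J, add_mul, mul_sub, hab, hab.symm]
  have hJP : J * P = J := by simp [J, P, sub_mul, mul_add, hab, hab.symm]; abel
  have hJJ : J * J = -P := by simp [J, P, sub_mul, mul_sub, hab, hab.symm]; abel
  have hcs' : (c : ℂ) ^ 2 + (s : ℂ) ^ 2 = 1 := by exact_mod_cast hcs
  have hU : planeRotation a b (c : ℂ) s = 1 + ((c : ℂ) - 1) • P + (s : ℂ) • J := rfl
  clear_value P J
  rw [mem_unitaryGroup_iff, hU, star_add, star_add, star_smul, star_smul, hP, hJ]
  simp only [star_one, Complex.star_def, map_sub, Complex.conj_ofReal, map_one, add_mul, mul_add,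
    smul_mul_smul, mul_one, one_mul, smul_neg, mul_neg, hPP, hPJ, hJP, hJJ]
  linear_combination (norm := module) hcs' • P

end UnitaryGroup

section Choi

variable {I O : Type} [Fintype I] [DecidableEq I]

lemma choiFun_apply (F : Matrix I I ℂ → Matrix O O ℂ) (p q : O) (k l : I) :
    choiFun F (p, k) (q, l) = F (single k l 1) p q := by
  simp [choiFun, Matrix.sum_apply, single_apply, ite_and]

lemma LinearMap.apply_eq_sum_mul_choiFun (F : Matrix I I ℂ →ₗ[ℂ] Matrix O O ℂ)
    (M : Matrix I I ℂ) (p q : O) : F M p q = ∑ k, ∑ l, M k l * choiFun F (p, k) (q, l) := by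
  conv_lhs => rw [matrix_eq_sum_single M]
  have hsingle : ∀ k l : I, Matrix.single k l (M k l) = M k l • Matrix.single k l 1 :=
    fun k l => by rw [smul_single, smul_eq_mul, mul_one]
  simp_rw [hsingle, map_sum, map_smul]
  simp [choiFun_apply, Matrix.sum_apply]

lemma trace_apply_single_eq_sum_choiFun [Fintype O] (F : Matrix I I ℂ → Matrix O O ℂ) (a : I) :
    (F (single a a 1)).trace = ∑ p, choiFun F (p, a) (p, a) := by
  simp [trace, choiFun_apply]

lemma tensorId_dyadM_one (F : Matrix I I ℂ → Matrix O O ℂ) :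
    tensorId F (dyadM (1 : Matrix I I ℂ)) = choiFun F := by
  ext ⟨p, k⟩ ⟨q, l⟩
  rw [choiFun_apply]
  change F (fun i j => dyadM 1 (i, k) (j, l)) p q = _
  congr 2
  ext i j
  simp only [dyadM, one_apply, single_apply]
  split_ifs <;> simp_all

lemma posSemidef_dyadM {m n : Type} [Fintype m] [Fintype n] (K : Matrix m n ℂ) :
    (dyadM K).PosSemidef :=
  posSemidef_vecMulVec_self_star fun p : m × n => K p.1 p.2

lemma IsCPMap.posSemidef_choiFun {n : ℕ} [Fintype O]
    {F : Matrix (Fin n) (Fin n) ℂ →ₗ[ℂ] Matrix O O ℂ} (hF : IsCPMap F) :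
    (choiFun F).PosSemidef :=
  tensorId_dyadM_one F ▸ hF n _ (posSemidef_dyadM 1)

end Choi

def IsConjCovariant {n : Type} [Fintype n] [DecidableEq n]
    (𝒞 : Matrix n n ℂ →ₗ[ℂ] Matrix n n ℂ) : Prop :=
  ∀ U ∈ unitaryGroup n ℂ, ∀ ρ : Matrix n n ℂ, 𝒞 ((star U)ᵀ * ρ * Uᵀ) = U * 𝒞 ρ * star U

namespace IsConjCovariant

variable {n : Type} [Fintype n] [DecidableEq n] {𝒞 : Matrix n n ℂ →ₗ[ℂ] Matrix n n ℂ}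

lemma sum_mul_choiFun_mul_star (h𝒞 : IsConjCovariant 𝒞) {U : Matrix n n ℂ}
    (hU : U ∈ unitaryGroup n ℂ) (p q k l : n) :
    ∑ p', ∑ q', U p p' * choiFun 𝒞 (p', k) (q', l) * star (U q q') =
      ∑ k', ∑ l', star (U k' k) * U l' l * choiFun 𝒞 (p, k') (q, l') := by
  have h := congrFun₂ (h𝒞 U hU (single k l 1)) p q
  rw [LinearMap.apply_eq_sum_mul_choiFun] at h
  simp only [mul_apply, transpose_apply, star_apply, RCLike.star_def, single_apply, ite_and,
    mul_ite, mul_one, mul_zero, Finset.sum_ite_eq, Finset.mem_univ, ↓reduceIte, ite_mul, zero_mul,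
    choiFun_apply, Finset.sum_mul] at h ⊢
  rw [h, Finset.sum_comm]

lemma choiFun_phase (h𝒞 : IsConjCovariant 𝒞) {t : n → ℂ} (ht : ∀ m, star (t m) * t m = 1)
    (p q k l : n) :
    t p * t k * choiFun 𝒞 (p, k) (q, l) = t q * t l * choiFun 𝒞 (p, k) (q, l) := by
  have h := h𝒞.sum_mul_choiFun_mul_star (diagonal_mem_unitaryGroup ht) p q k l
  simp [diagonal_apply, apply_ite (starRingEnd ℂ), ite_mul, mul_ite] at h
  have ht' : ∀ m, starRingEnd ℂ (t m) * t m = 1 := ht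
  linear_combination (t k * t q) * h - (t p * t k * choiFun 𝒞 (p, k) (q, l)) * ht' q
    + (t q * t l * choiFun 𝒞 (p, k) (q, l)) * ht' k

lemma choiFun_eq_zero_of_sym2_ne (h𝒞 : IsConjCovariant 𝒞) {p q k l : n}
    (h : s(p, k) ≠ s(q, l)) : choiFun 𝒞 (p, k) (q, l) = 0 := by
  by_contra hC
  refine h (sym2_eq_of_forall_ite_I_mul_eq fun a => mul_right_cancel₀ hC ?_)
  refine h𝒞.choiFun_phase (t := fun m => if m = a then Complex.I else 1) (fun m => ?_) p q k l
  split_ifs <;> simp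

lemma choiFun_perm (h𝒞 : IsConjCovariant 𝒞) (σ : Equiv.Perm n) (p q k l : n) :
    choiFun 𝒞 (σ p, σ k) (σ q, σ l) = choiFun 𝒞 (p, k) (q, l) := by
  have h := h𝒞.sum_mul_choiFun_mul_star (permMatrix_mem_unitaryGroup σ) p q (σ k) (σ l)
  simpa [PEquiv.toMatrix_apply] using h

lemma choiFun_eq_of_ne (h𝒞 : IsConjCovariant 𝒞) {a b c e : n} (hab : a ≠ b) (hce : c ≠ e) :
    choiFun 𝒞 (c, e) (c, e) = choiFun 𝒞 (a, b) (a, b) ∧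
      choiFun 𝒞 (c, e) (e, c) = choiFun 𝒞 (a, b) (b, a) := by
  obtain ⟨σ, hσa, hσb⟩ :=
    MulAction.is_two_pretransitive_iff.mp (Equiv.Perm.isMultiplyPretransitive n 2) hab hce
  rw [Equiv.Perm.smul_def] at hσa hσb
  rw [← hσa, ← hσb]
  exact ⟨h𝒞.choiFun_perm σ a a b b, h𝒞.choiFun_perm σ a b b a⟩

lemma choiFun_diag_eq_add (h𝒞 : IsConjCovariant 𝒞) {a b : n} (hab : a ≠ b) :
    choiFun 𝒞 (a, a) (a, a) = choiFun 𝒞 (b, a) (b, a) + choiFun 𝒞 (a, b) (b, a) := by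
  have h₁ : choiFun 𝒞 (a, a) (b, a) = 0 := h𝒞.choiFun_eq_zero_of_sym2_ne (by simp [hab])
  have h₂ : choiFun 𝒞 (b, a) (a, a) = 0 := h𝒞.choiFun_eq_zero_of_sym2_ne (by simp [hab.symm])
  have h₃ : choiFun 𝒞 (a, a) (b, b) = 0 := h𝒞.choiFun_eq_zero_of_sym2_ne (by simp [hab])
  have h₄ : choiFun 𝒞 (a, b) (b, b) = 0 := h𝒞.choiFun_eq_zero_of_sym2_ne (by simp [hab])
  -- a rotation with rational entries; any angle with `c * s ≠ 0` would do
  have h := h𝒞.sum_mul_choiFun_mul_star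
    (planeRotation_mem_unitaryGroup hab (c := 3 / 5) (s := 4 / 5) (by norm_num)) a b a a
  simp [planeRotation, one_apply, single_apply, hab, hab.symm, Finset.sum_add_distrib, add_mul,
    mul_add, sub_mul, mul_sub, ite_mul, mul_ite, apply_ite (starRingEnd ℂ), map_ofNat,
    h₁, h₂, h₃, h₄] at h
  linear_combination (25 / 12) * h

end IsConjCovariant

lemma IsConjCovariant.choiFun_eq {d : ℕ}
    {𝒞 : Matrix (Fin d) (Fin d) ℂ →ₗ[ℂ] Matrix (Fin d) (Fin d) ℂ} (h𝒞 : IsConjCovariant 𝒞)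
    {a b : Fin d} (hab : a ≠ b) :
    choiFun 𝒞 = choiFun 𝒞 (a, b) (a, b) • 1 + choiFun 𝒞 (a, b) (b, a) • swapOp d := by
  set α := choiFun 𝒞 (a, b) (a, b)
  set β := choiFun 𝒞 (a, b) (b, a)
  have hα : ∀ {c e}, c ≠ e → choiFun 𝒞 (c, e) (c, e) = α := fun h =>
    (h𝒞.choiFun_eq_of_ne hab h).1
  have hβ : ∀ {c e}, c ≠ e → choiFun 𝒞 (c, e) (e, c) = β := fun h =>
    (h𝒞.choiFun_eq_of_ne hab h).2
  have hdiag : ∀ c, choiFun 𝒞 (c, c) (c, c) = α + β := fun c => by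
    obtain ⟨e, hec⟩ : ∃ e, e ≠ c := (hab.ne_or_ne c).elim (⟨a, ·⟩) (⟨b, ·⟩)
    rw [h𝒞.choiFun_diag_eq_add hec.symm, hα hec, hβ hec.symm]
  ext ⟨p, k⟩ ⟨q, l⟩
  by_cases h : s(p, k) = s(q, l)
  · rw [Sym2.eq_iff] at h
    rcases h with ⟨rfl, rfl⟩ | ⟨rfl, rfl⟩
    · by_cases hpk : p = k
      · subst hpk; simp [hdiag, swapOp]
      · simp [hα hpk, swapOp, hpk]
    · by_cases hpk : p = k
      · subst hpk; simp [hdiag, swapOp]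
      · simp [hβ hpk, swapOp, hpk, Ne.symm hpk]
  · rw [h𝒞.choiFun_eq_zero_of_sym2_ne h]
    rw [Sym2.eq_iff, not_or] at h
    simp [swapOp, one_apply, h.1, h.2]

section SwapOp

variable {d : ℕ}

lemma smul_one_add_smul_swapOp (α β : ℂ) :
    α • 1 + β • swapOp d = (α + β) • Pplus d + (α - β) • Pminus d := by
  simp only [Pplus, Pminus, smul_smul]
  module

lemma trace_apply_single_of_choiFun_eq {F : Matrix (Fin d) (Fin d) ℂ → Matrix (Fin d) (Fin d) ℂ}
    {α β : ℂ} (hF : choiFun F = α • 1 + β • swapOp d) (a : Fin d) :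
    (F (single a a 1)).trace = d * α + β := by
  simp [trace_apply_single_eq_sum_choiFun, hF, swapOp, one_apply, Finset.sum_add_distrib,
    and_iff_left_of_imp (Eq.symm : _ = a → _)]

lemma nonneg_of_posSemidef_smul_one_add_smul_swapOp {α β : ℂ}
    (h : (α • 1 + β • swapOp d).PosSemidef) {a b : Fin d} (hab : a ≠ b) :
    0 ≤ α + β ∧ 0 ≤ α - β := by
  constructor
  · simpa [swapOp] using h.diag_nonneg (i := (a, a))
  · set v : Fin d × Fin d → ℂ := Pi.single (a, b) 1 - Pi.single (b, a) 1
    have hform : star v ⬝ᵥ ((α • 1 + β • swapOp d) *ᵥ v) = 2 * (α - β) := by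
      simp [v, dotProduct, mulVec, swapOp, one_apply, Pi.single_apply, Fintype.sum_prod_type,
        Prod.ext_iff, ite_and, hab, hab.symm, Finset.sum_add_distrib, Finset.sum_sub_distrib,
        sub_mul, mul_sub, mul_add, ite_mul, mul_ite]
      ring
    have h2 : (0 : ℂ) ≤ 2 * (α - β) := hform ▸ h.dotProduct_mulVec_nonneg v
    simpa using mul_nonneg (by norm_num [Complex.le_def] : (0 : ℂ) ≤ 2⁻¹) h2

end SwapOp

/-- a linear map on `L(ℂ^d)` satisfying
`𝒞(U* ρ Uᵀ) = U 𝒞(ρ) U†` for all unitaries `U` has Choi operator of the form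
`γ P₊ + δ P₋`; moreover `(d+1)γ + (d-1)δ = 2` if `𝒞` is trace preserving, and
`γ, δ ≥ 0` if `𝒞` is completely positive. -/
theorem stmt12 (d : ℕ) (hd : 2 ≤ d)
    (𝒞 : Matrix (Fin d) (Fin d) ℂ →ₗ[ℂ] Matrix (Fin d) (Fin d) ℂ)
    (hcov : ∀ U ∈ Matrix.unitaryGroup (Fin d) ℂ,
      ∀ ρ : Matrix (Fin d) (Fin d) ℂ,
        𝒞 ((star U).transpose * ρ * U.transpose) = U * 𝒞 ρ * star U) :
    ∃ γ δ : ℂ,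
      choiFun ⇑𝒞 = γ • Pplus d + δ • Pminus d ∧
      ((∀ A : Matrix (Fin d) (Fin d) ℂ, (𝒞 A).trace = A.trace) →
        ((d : ℂ) + 1) * γ + ((d : ℂ) - 1) * δ = 2) ∧
      (IsCPMap 𝒞 → 0 ≤ γ ∧ 0 ≤ δ) := by
  obtain ⟨a, b, hab⟩ : ∃ a b : Fin d, a ≠ b :=
    ⟨⟨0, by omega⟩, ⟨1, by omega⟩, by simp [Fin.ext_iff]⟩
  have hC := IsConjCovariant.choiFun_eq hcov hab
  set α := choiFun 𝒞 (a, b) (a, b)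
  set β := choiFun 𝒞 (a, b) (b, a)
  refine ⟨α + β, α - β, hC.trans (smul_one_add_smul_swapOp α β), fun htp => ?_, fun hcp => ?_⟩
  · have htr := trace_apply_single_of_choiFun_eq hC a
    rw [htp, trace_single_eq_same] at htr
    linear_combination 2 * htr.symm
  · exact nonneg_of_posSemidef_smul_one_add_smul_swapOp (hC ▸ hcp.posSemidef_choiFun) hab

end
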